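/- Let G be a finitely generated group and n ≥ 0 a fixed integer. Then the following are equivalent: (i) γ_{n+1}(G) is a finitely generated group; (ii) for every group H and every surjective group homomorphism p : H → G whose kernel N satisfies N ≤ Z_n(H), the subgroup γ_{n+1}(H) is finitely generated. -/

import Mathlib

/-!
Only (i) ⇒ (ii) has content. If `K ≤ H` is finitely generated with `p K = G`, then
`H = K · Z_n(H)`; the three subgroups lemma gives `[γ_{i+1}(H), Z_{j+i+1}(H)] ≤ Z_j(H)`,
which forces `γ_{n+1}(H) = γ_{n+1}(K)`, so we may assume `H` finitely generated. Induction
on `n`, factoring `H → G` through `H / [ker p, H]`, reduces everything to central extensions.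

For a central extension of a finitely generated group `H`, the term `γ_{m+1}(H)` is the normal
closure of a finite set of iterated commutators of generators, and modulo the centre it is
generated by finitely many lifts `S`. A generator `x` conjugates `s·z` (with `z` central)
to `(x s x⁻¹) s⁻¹ (s z)`, so the finite set, `S` and the conjugates `x^{±1} S x^{∓1}`
generate a normal subgroup, which is therefore all of `γ_{m+1}(H)`.
-/

open Subgroup
open scoped commutatorElement

namespace Subgroup

variable {G H : Type*} [Group G] [Group H]

theorem FG.map {K : Subgroup G} (hK : K.FG) (f : G →* H) : (K.map f).FG := by
  obtain ⟨S, hS, hfin⟩ := (fg_iff K).mp hK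
  exact (fg_iff _).mpr ⟨f '' S, by rw [← MonoidHom.map_closure, hS], hfin.image f⟩

theorem exists_fg_le_map_eq {f : G →* H} {K : Subgroup G} (h : (K.map f).FG) :
    ∃ S ≤ K, S.FG ∧ S.map f = K.map f := by
  obtain ⟨T, hT, hTfin⟩ := (fg_iff _).mp h
  have hTK : T ⊆ f '' K := by rw [← coe_map, ← hT]; exact subset_closure
  obtain ⟨T', hT'K, hT'fin, hT'⟩ := Set.exists_subset_image_finite_and
    (p := fun T => closure T = K.map f) |>.mp ⟨T, hTK, hTfin, hT⟩
  exact ⟨closure T', (closure_le K).mpr hT'K, (fg_iff _).mpr ⟨T', rfl, hT'fin⟩,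
    by rw [MonoidHom.map_closure, hT']⟩

theorem map_top_lowerCentralSeries_of_surjective {f : G →* H} (hf : Function.Surjective f)
    (m : ℕ) :
    ((⊤ : Subgroup G).lowerCentralSeries m).map f = (⊤ : Subgroup H).lowerCentralSeries m := by
  rw [map_lowerCentralSeries, map_top_of_surjective f hf]

theorem normal_of_conj_mem_of_closure_eq_top {X : Set G} (hX : closure X = ⊤) {T : Subgroup G}
    (hT : ∀ x ∈ X, ∀ t ∈ T, x * t * x⁻¹ ∈ T ∧ x⁻¹ * t * x ∈ T) : T.Normal := by
  refine normalizer_eq_top_iff.mp (top_unique (hX ▸ (closure_le _).mpr fun x hx => ?_))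
  refine mem_normalizer_iff.mpr fun t => ⟨fun ht => (hT x hx t ht).1, fun ht => ?_⟩
  simpa [mul_assoc] using (hT x hx _ ht).2

theorem fg_normalClosure_of_le_sup_center [Group.FG G] {C : Set G} (hC : C.Finite)
    {S : Subgroup G} (hS : S.FG) (hSC : S ≤ normalClosure C)
    (hCS : normalClosure C ≤ S ⊔ center G) : (normalClosure C).FG := by
  obtain ⟨X, hX, hXfin⟩ := Group.fg_iff.mp ‹_›
  obtain ⟨R, hR, hRfin⟩ := (fg_iff S).mp hS
  set W := C ∪ R ∪ Set.image2 (fun y s => y * s * y⁻¹) (X ∪ X⁻¹) R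
  set T := closure W
  have hST : S ≤ T := hR ▸ closure_mono (by intro s hs; exact .inl (.inr hs))
  have hconjS : ∀ y ∈ X ∪ X⁻¹, ∀ s ∈ S, y * s * y⁻¹ ∈ T := by
    intro y hy s hs
    have : S.map (MulAut.conj y).toMonoidHom ≤ T := by
      rw [← hR, MonoidHom.map_closure]
      exact closure_mono (by rintro _ ⟨r, hr, rfl⟩; exact .inr ⟨y, hy, r, hr, rfl⟩)
    exact this ⟨s, hs, rfl⟩
  have hTC : T ≤ normalClosure C := by
    refine (closure_le _).mpr ?_
    rintro _ ((hc | hr) | ⟨y, -, r, hr, rfl⟩)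
    · exact subset_normalClosure hc
    · exact hSC (hR ▸ subset_closure hr)
    · exact normalClosure_normal.conj_mem _ (hSC (hR ▸ subset_closure hr)) y
  have hconjT : ∀ y ∈ X ∪ X⁻¹, ∀ t ∈ T, y * t * y⁻¹ ∈ T := by
    intro y hy t ht
    obtain ⟨s, hs, z, hz, rfl⟩ := mem_sup_of_normal_right.mp (hCS (hTC ht))
    have : y * (s * z) * y⁻¹ = y * s * y⁻¹ * (s⁻¹ * (s * z)) := by
      simp only [mul_assoc, inv_mul_cancel_left, mem_center_iff.mp hz y⁻¹]
    rw [this]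
    exact T.mul_mem (hconjS y hy s hs) (T.mul_mem (T.inv_mem (hST hs)) ht)
  have : T.Normal := normal_of_conj_mem_of_closure_eq_top hX fun x hx t ht =>
    ⟨hconjT x (.inl hx) t ht, by simpa using hconjT x⁻¹ (.inr (by simpa)) t ht⟩
  have hCT : normalClosure C = T :=
    le_antisymm (normalClosure_le_normal fun c hc => subset_closure (.inl (.inl hc))) hTC
  rw [hCT]
  exact (fg_iff _).mpr ⟨W, rfl, (hC.union hRfin).union ((hXfin.union hXfin.inv).image2 _ hRfin)⟩

theorem commutator_normalClosure_top_le {X : Set G} (hX : closure X = ⊤) (C : Set G) :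
    ⁅normalClosure C, ⊤⁆ ≤ normalClosure (Set.image2 (⁅·, ·⁆) C X) := by
  set M := normalClosure (Set.image2 (⁅·, ·⁆) C X)
  suffices normalClosure C ≤ (center (G ⧸ M)).comap (QuotientGroup.mk' M) by
    rw [← upperCentralSeriesStep_eq_comap_center] at this
    exact commutator_le.mpr fun c hc g _ => this hc g
  refine normalClosure_le_normal fun c hc => ?_
  have hXM : closure (QuotientGroup.mk' M '' X) = ⊤ := by
    rw [← MonoidHom.map_closure, hX, map_top_of_surjective _ (QuotientGroup.mk'_surjective M)]
  rw [SetLike.mem_coe, mem_comap, ← centralizer_univ, ← coe_top, ← hXM,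
    centralizer_closure, mem_centralizer_iff_commutator_eq_one']
  rintro _ ⟨x, hx, rfl⟩
  rw [← map_commutatorElement, QuotientGroup.mk'_apply, QuotientGroup.eq_one_iff]
  exact subset_normalClosure ⟨c, hc, x, hx, rfl⟩

theorem exists_finite_normalClosure_eq_lowerCentralSeries [Group.FG G] (m : ℕ) :
    ∃ C : Set G, C.Finite ∧ normalClosure C = (⊤ : Subgroup G).lowerCentralSeries m := by
  obtain ⟨X, hX, hXfin⟩ := Group.fg_iff.mp ‹_›
  induction m with
  | zero => exact ⟨X, hXfin, top_unique (hX ▸ (closure_le _).mpr subset_normalClosure)⟩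
  | succ m ih =>
    obtain ⟨C, hCfin, hC⟩ := ih
    refine ⟨Set.image2 (⁅·, ·⁆) C X, hCfin.image2 _ hXfin, le_antisymm ?_ ?_⟩
    · refine normalClosure_le_normal ?_
      rintro _ ⟨c, hc, x, -, rfl⟩
      exact commutator_mem_commutator (hC ▸ subset_normalClosure hc) (mem_top x)
    · rw [lowerCentralSeries_succ, ← hC]
      exact commutator_normalClosure_top_le hX C

theorem fg_lowerCentralSeries_of_ker_le_center [Group.FG H] {p : H →* G}
    (hp : Function.Surjective p) (hker : p.ker ≤ center H) {m : ℕ}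
    (hG : ((⊤ : Subgroup G).lowerCentralSeries m).FG) :
    ((⊤ : Subgroup H).lowerCentralSeries m).FG := by
  obtain ⟨C, hC, hCγ⟩ := exists_finite_normalClosure_eq_lowerCentralSeries (G := H) m
  rw [← map_top_lowerCentralSeries_of_surjective hp] at hG
  obtain ⟨S, hSγ, hS, hSmap⟩ := exists_fg_le_map_eq hG
  rw [← hCγ] at hSγ ⊢
  refine fg_normalClosure_of_le_sup_center hC hS hSγ ?_
  calc normalClosure C ≤ S ⊔ p.ker := map_le_map_iff.mp (hCγ ▸ hSmap.ge)
    _ ≤ S ⊔ center H := sup_le_sup_left hker S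

theorem commutator_commutator_le_of_rotate {A B C N : Subgroup G} [N.Normal]
    (h₁ : ⁅⁅B, C⁆, A⁆ ≤ N) (h₂ : ⁅⁅C, A⁆, B⁆ ≤ N) :
    ⁅⁅A, B⁆, C⁆ ≤ N := by
  simp_rw [← QuotientGroup.ker_mk' N, ← map_eq_bot_iff, map_commutator] at h₁ h₂ ⊢
  exact commutator_commutator_eq_bot_of_rotate h₁ h₂

theorem commutator_lowerCentralSeries_upperCentralSeries_le (i j : ℕ) :
    ⁅(⊤ : Subgroup G).lowerCentralSeries i, upperCentralSeries G (j + i + 1)⁆ ≤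
      upperCentralSeries G j := by
  induction i generalizing j with
  | zero =>
    rw [lowerCentralSeries_zero, commutator_comm]
    exact commutator_upperCentralSeries_top_le G j
  | succ i ih =>
    rw [lowerCentralSeries_succ]
    apply commutator_commutator_le_of_rotate
    · rw [commutator_comm ⊤, commutator_comm]
      exact (commutator_mono le_rfl (commutator_upperCentralSeries_top_le G _)).trans (ih j)
    · rw [commutator_comm (upperCentralSeries G _),
        show j + (i + 1) + 1 = j + 1 + i + 1 by omega]
      exact (commutator_mono (ih (j + 1)) le_rfl).trans (commutator_upperCentralSeries_top_le G j)

theorem lowerCentralSeries_sup_upperCentralSeries_le (K : Subgroup G) (i j : ℕ) :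
    (K ⊔ upperCentralSeries G (j + i)).lowerCentralSeries i ≤
      K.lowerCentralSeries i ⊔ upperCentralSeries G j := by
  induction i generalizing j with
  | zero => exact le_rfl
  | succ i ih =>
    rw [lowerCentralSeries_succ, lowerCentralSeries_succ, show j + (i + 1) = j + 1 + i by omega]
    refine commutator_le.mpr fun a ha b hb => ?_
    obtain ⟨u, hu, z, hz, rfl⟩ := mem_sup_of_normal_right.mp (ih (j + 1) ha)
    obtain ⟨k, hk, w, hw, rfl⟩ := mem_sup_of_normal_right.mp hb
    have hzkw : ⁅z, k * w⁆ ∈ upperCentralSeries G j := mem_upperCentralSeries_succ_iff.mp hz _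
    have huw : ⁅u, w⁆ ∈ upperCentralSeries G j :=
      commutator_lowerCentralSeries_upperCentralSeries_le i j
        (commutator_mem_commutator (lowerCentralSeries_mono i le_top hu)
          (Nat.add_right_comm j 1 i ▸ hw))
    rw [commutatorElement_mul_left_eq_conj_mul, commutatorElement_mul_right_eq_mul_conj u k w,
      show ⁅u, k⁆ * k * ⁅u, w⁆ * k⁻¹ = ⁅u, k⁆ * (k * ⁅u, w⁆ * k⁻¹) by group]
    refine mul_mem (mem_sup_right (Normal.conj_mem inferInstance _ hzkw u)) ?_
    refine mul_mem (mem_sup_left (commutator_mem_commutator hu hk)) ?_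
    exact mem_sup_right (Normal.conj_mem inferInstance _ huw k)

theorem top_lowerCentralSeries_eq_of_sup_upperCentralSeries_eq_top {K : Subgroup G} {n : ℕ}
    (hK : K ⊔ upperCentralSeries G n = ⊤) :
    (⊤ : Subgroup G).lowerCentralSeries n = K.lowerCentralSeries n :=
  le_antisymm (by simpa [hK] using lowerCentralSeries_sup_upperCentralSeries_le K n 0)
    (lowerCentralSeries_mono n le_top)

theorem comap_subtype_upperCentralSeries_le (K : Subgroup G) (n : ℕ) :
    (upperCentralSeries G n).comap K.subtype ≤ upperCentralSeries K n := by
  induction n with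
  | zero => intro x hx; simpa using hx
  | succ n ih => exact fun x hx y => ih (hx y)

theorem map_mk'_le_center_of_commutator_le {N M : Subgroup G} [M.Normal] (h : ⁅N, ⊤⁆ ≤ M) :
    N.map (QuotientGroup.mk' M) ≤ center (G ⧸ M) := by
  rw [← commutator_top_right_eq_bot_iff_le_center,
    ← map_top_of_surjective _ (QuotientGroup.mk'_surjective M), ← map_commutator,
    map_eq_bot_iff, QuotientGroup.ker_mk']
  exact h

theorem fg_lowerCentralSeries_of_le_upperCentralSeries [Group.FG G] {N : Subgroup G} [N.Normal]
    {n : ℕ} (hN : N ≤ upperCentralSeries G n) {m : ℕ}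
    (h : ((⊤ : Subgroup (G ⧸ N)).lowerCentralSeries m).FG) :
    ((⊤ : Subgroup G).lowerCentralSeries m).FG := by
  induction n generalizing N with
  | zero =>
    refine fg_lowerCentralSeries_of_ker_le_center (QuotientGroup.mk'_surjective N) ?_ h
    rw [QuotientGroup.ker_mk']
    exact hN.trans bot_le
  | succ n ih =>
    have hM : ⁅N, ⊤⁆ ≤ upperCentralSeries G n :=
      (commutator_mono hN le_rfl).trans (commutator_upperCentralSeries_top_le G n)
    have : Group.FG (G ⧸ ⁅N, ⊤⁆) := Group.fg_of_surjective (QuotientGroup.mk'_surjective _)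
    refine ih hM (fg_lowerCentralSeries_of_ker_le_center
      (p := QuotientGroup.map _ N (MonoidHom.id G)
        ((commutator_le_left N ⊤).trans (comap_id N).ge))
      (QuotientGroup.map_surjective_of_surjective _ N _ QuotientGroup.mk_surjective _) ?_ h)
    rw [QuotientGroup.ker_map, comap_id]
    exact map_mk'_le_center_of_commutator_le le_rfl

theorem fg_lowerCentralSeries_of_ker_le_upperCentralSeries [Group.FG H] {p : H →* G}
    (hp : Function.Surjective p) {n : ℕ} (hker : p.ker ≤ upperCentralSeries H n) {m : ℕ}
    (hG : ((⊤ : Subgroup G).lowerCentralSeries m).FG) :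
    ((⊤ : Subgroup H).lowerCentralSeries m).FG := by
  refine fg_lowerCentralSeries_of_le_upperCentralSeries hker ?_
  rw [← map_top_lowerCentralSeries_of_surjective
    (f := (QuotientGroup.quotientKerEquivOfSurjective p hp).symm.toMonoidHom)
    (MulEquiv.surjective _)]
  exact hG.map _

end Subgroup

/-- For a finitely generated group `G` and `n ≥ 0`, the following are equivalent:
(i) `γ_{n+1}(G) = lowerCentralSeries G n` is finitely generated;
(ii) for every surjective homomorphism `p : H → G` with kernel contained in the `n`-th
term of the upper central series of `H`, `γ_{n+1}(H)` is finitely generated. -/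
theorem fg_lowerCentralSeries_iff_fg_of_extensions
    (G : Type u) [Group G] (hG : Group.FG G) (n : ℕ) :
    Group.FG (Subgroup.lowerCentralSeries (⊤ : Subgroup G) n) ↔
      ∀ (H : Type u) (_ : Group H) (p : H →* G), Function.Surjective p →
        p.ker ≤ Subgroup.upperCentralSeries H n → Group.FG (Subgroup.lowerCentralSeries (⊤ : Subgroup H) n) := by
  refine ⟨fun hγ H _ p hp hker => ?_,
    fun h => h G _ (MonoidHom.id G) Function.surjective_id (by simp)⟩
  rw [Group.fg_iff_subgroup_fg] at hγ ⊢
  obtain ⟨K, -, hK, hKp⟩ := exists_fg_le_map_eq (f := p) (K := ⊤)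
    (by rw [map_top_of_surjective p hp]; exact Group.fg_def.mp hG)
  have hKZ : K ⊔ Subgroup.upperCentralSeries H n = ⊤ :=
    top_unique ((map_le_map_iff.mp hKp.ge).trans (sup_le_sup_left hker K))
  have hq : Function.Surjective (p.comp K.subtype) := by
    intro g
    obtain ⟨h, rfl⟩ := hp g
    obtain ⟨k, hk, hkh⟩ := hKp.ge (mem_map_of_mem p (mem_top h))
    exact ⟨⟨k, hk⟩, hkh⟩
  have : Group.FG K := (Group.fg_iff_subgroup_fg K).mpr hK
  have hγK : ((⊤ : Subgroup K).lowerCentralSeries n).FG :=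
    fg_lowerCentralSeries_of_ker_le_upperCentralSeries hq
      (fun x hx => comap_subtype_upperCentralSeries_le K n (hker hx)) hγ
  rw [top_lowerCentralSeries_eq_of_sup_upperCentralSeries_eq_top hKZ,
    ← top_subtype_lowerCentralSeries]
  exact hγK.map K.subtype
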